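/- If σ₁ ≡₀* σ₂ ≤ σ₃ where σ₁, σ₂ are finite firing sequences and σ₃ is a possibly infinite firing sequence of a net N (≡₀* being the reflexive-transitive closure of adjacency), then there exists a firing sequence σ' of N with σ₁ ≤ σ' ≡₀* σ₃; if σ₃ is finite then σ' is finite. -/

import Mathlib

open Relation

/-- A place/transition net with place type `S` and transition type `T`. -/
structure Net (S T : Type) where
  /-- arc weight from place `s` to transition `t` -/
  pre : T → S → ℕ
  /-- arc weight from transition `t` to place `s` -/
  post : T → S → ℕ
  /-- the initial marking -/
  M0 : S → ℕ
  pre_finite : ∀ t, {s | pre t s > 0}.Finite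
  pre_nonempty : ∀ t, ∃ s, pre t s > 0
  post_finite : ∀ t, {s | post t s > 0}.Finite

namespace Net

variable {S T : Type} (N : Net S T)

/-- the singleton step `{t}` is enabled at marking `M` -/
def Enabled (t : T) (M : S → ℕ) : Prop := ∀ s, N.pre t s ≤ M s

/-- the two-element multiset step `{t,u}` is enabled at marking `M` -/
def Enabled2 (t u : T) (M : S → ℕ) : Prop := ∀ s, N.pre t s + N.pre u s ≤ M s

/-- firing transition `t` leads from marking `M` to marking `M'` -/
def Fires (t : T) (M M' : S → ℕ) : Prop :=
  N.Enabled t M ∧ M' = fun s => M s - N.pre t s + N.post t s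

/-- firing the finite transition sequence `σ` leads from `M` to `M'` -/
inductive FiresList : (S → ℕ) → List T → (S → ℕ) → Prop
  | nil (M : S → ℕ) : FiresList M [] M
  | cons {M M₁ M' : S → ℕ} {t : T} {σ : List T} :
      N.Fires t M M₁ → FiresList M₁ σ M' → FiresList M (t :: σ) M'

/-- a marking is reachable -/
def Reachable (M : S → ℕ) : Prop := ∃ σ : List T, N.FiresList N.M0 σ M

/-- `σ` is a finite firing sequence of `N` -/
def FS (σ : List T) : Prop := ∃ M, N.FiresList N.M0 σ M

/-- `σ` is a (possibly infinite) firing sequence of `N` -/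
def FSInf (σ : Stream'.Seq T) : Prop := ∀ n, N.FS (σ.take n)

/-- adjacency `≡₀` on finite firing sequences -/
def Adj (σ ρ : List T) : Prop :=
  ∃ (α β : List T) (t u : T) (M : S → ℕ),
    σ = α ++ t :: u :: β ∧ ρ = α ++ u :: t :: β ∧
    N.FiresList N.M0 α M ∧ N.Enabled2 t u M ∧ N.FS σ ∧ N.FS ρ

/-- adjacency `≡₀` on possibly infinite firing sequences -/
def AdjSeq (σ ρ : Stream'.Seq T) : Prop :=
  ∃ (α : List T) (β : Stream'.Seq T) (t u : T) (M : S → ℕ),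
    σ = (Stream'.Seq.ofList (α ++ [t, u])).append β ∧
    ρ = (Stream'.Seq.ofList (α ++ [u, t])).append β ∧
    N.FiresList N.M0 α M ∧ N.Enabled2 t u M ∧ N.FSInf σ ∧ N.FSInf ρ

end Net

/-- the finite sequence `l` is a prefix of the possibly infinite sequence `s` -/
def ListPrefixSeq {T : Type} (l : List T) (s : Stream'.Seq T) : Prop :=
  s.take l.length = l

namespace Net

variable {S T : Type} (N : Net S T)

/-- the preorder `⊑₀^∞` on possibly infinite firing sequences -/
def Sqsubseteq0 (σ ρ : Stream'.Seq T) : Prop :=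
  ∀ σ'' : List T, N.FS σ'' → ListPrefixSeq σ'' σ →
    ∃ σ' ρ' : List T, N.FS σ' ∧ N.FS ρ' ∧ σ'' <+: σ' ∧
      ReflTransGen N.Adj σ' ρ' ∧ ListPrefixSeq ρ' ρ

end Net

/-! Induct along the chain `σ₁ ≡₀ ⋯ ≡₀ σ₂`. Firing a concurrently enabled step `{t, u}` as `t u` or
as `u t` leads to the same marking, so adjacent sequences reach the same marking. Hence if `σ ≡₀ ρ`
and `ρ` is a prefix of a firing sequence `ρ τ`, then `σ τ` is again a firing sequence, adjacent to
`ρ τ`, and it has the same (finite or infinite) tail `τ`. -/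

namespace Stream'.Seq

variable {α : Type*}

theorem take_ofList_append (l : List α) (s : Seq α) (m : ℕ) :
    ((ofList l).append s).take m = l.take m ++ s.take (m - l.length) := by
  induction l generalizing m with
  | nil => simp [ofList_nil, nil_append]
  | cons a l ih => cases m <;> simp [ofList_cons, cons_append, ih]

theorem ofList_take_append_drop (n : ℕ) (s : Seq α) :
    (ofList (s.take n)).append (s.drop n) = s := by
  induction n generalizing s with
  | zero => simp [ofList_nil, nil_append]
  | succ n ih =>
    cases s using recOn with
    | nil => simp [ofList_nil]
    | cons a s => simp [ofList_cons, cons_append, ih]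

theorem terminates_ofList_append_iff (l : List α) (s : Seq α) :
    ((ofList l).append s).Terminates ↔ s.Terminates := by
  induction l with
  | nil => simp [ofList_nil, nil_append]
  | cons a l ih => simp [ofList_cons, cons_append, ih]

end Stream'.Seq

open Stream' (Seq)

theorem ListPrefixSeq.eq_ofList_append {T : Type} {l : List T} {s : Seq T}
    (h : ListPrefixSeq l s) : s = (Seq.ofList l).append (s.drop l.length) := by
  conv_lhs => rw [← Seq.ofList_take_append_drop l.length s, h]

theorem listPrefixSeq_ofList_append {T : Type} (l : List T) (s : Seq T) :
    ListPrefixSeq l ((Seq.ofList l).append s) := by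
  simp [ListPrefixSeq, Seq.take_ofList_append]

namespace Net

variable {S T : Type} {N : Net S T}

theorem firesList_append {M M' : S → ℕ} {l₁ l₂ : List T} :
    N.FiresList M (l₁ ++ l₂) M' ↔ ∃ M₁, N.FiresList M l₁ M₁ ∧ N.FiresList M₁ l₂ M' := by
  induction l₁ generalizing M with
  | nil => exact ⟨fun h => ⟨M, .nil M, h⟩, fun ⟨_, .nil _, h⟩ => h⟩
  | cons t l₁ ih =>
    constructor
    · rintro (_ | ⟨hf, h⟩)
      obtain ⟨M₁, h₁, h₂⟩ := ih.mp h
      exact ⟨M₁, .cons hf h₁, h₂⟩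
    · rintro ⟨M₁, _ | ⟨hf, h₁⟩, h₂⟩
      exact .cons hf (ih.mpr ⟨M₁, h₁, h₂⟩)

theorem FiresList.unique {M M₁ M₂ : S → ℕ} {l : List T}
    (h₁ : N.FiresList M l M₁) (h₂ : N.FiresList M l M₂) : M₁ = M₂ := by
  induction h₁ with
  | nil => cases h₂; rfl
  | cons hf _ ih =>
    obtain _ | ⟨hf', h⟩ := h₂
    exact ih (hf.2 ▸ hf'.2 ▸ h)

theorem FS.of_append {l₁ l₂ : List T} (h : N.FS (l₁ ++ l₂)) : N.FS l₁ :=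
  let ⟨_, h⟩ := h
  let ⟨M₁, h₁, _⟩ := firesList_append.mp h
  ⟨M₁, h₁⟩

theorem FS.take {l : List T} (h : N.FS l) (m : ℕ) : N.FS (l.take m) :=
  FS.of_append (l₂ := l.drop m) (by rwa [List.take_append_drop])

theorem Enabled2.firesList_swap {t u : T} {M : S → ℕ} (h : N.Enabled2 t u M) :
    ∃ M', N.FiresList M [t, u] M' ∧ N.FiresList M [u, t] M' := by
  -- `Enabled2` makes both truncated subtractions exact, so either order yields this marking.
  refine ⟨fun s => M s - N.pre t s - N.pre u s + N.post t s + N.post u s, ?_, ?_⟩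
  all_goals
    refine .cons ⟨fun s => ?_, rfl⟩ (.cons ⟨fun s => ?_, funext fun s => ?_⟩ (.nil _))
    all_goals (have := h s; beta_reduce; omega)

theorem Adj.firesList_of_firesList {σ₁ σ₂ : List T} {M : S → ℕ} (h : N.Adj σ₁ σ₂)
    (h₂ : N.FiresList N.M0 σ₂ M) : N.FiresList N.M0 σ₁ M := by
  obtain ⟨α, β, t, u, Mα, rfl, rfl, hα, htu, -, -⟩ := h
  obtain ⟨M', htu', hut'⟩ := htu.firesList_swap
  have split : ∀ a b : T, α ++ a :: b :: β = α ++ [a, b] ++ β := by simp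
  rw [split] at h₂ ⊢
  obtain ⟨M₂, h₂, hβ⟩ := firesList_append.mp h₂
  obtain ⟨M₁, hα', hut⟩ := firesList_append.mp h₂
  obtain rfl := hα'.unique hα
  obtain rfl := hut.unique hut'
  exact firesList_append.mpr ⟨M₂, firesList_append.mpr ⟨M₁, hα, htu'⟩, hβ⟩

theorem Adj.fs_append {σ₁ σ₂ : List T} (h : N.Adj σ₁ σ₂) {γ : List T}
    (h₂ : N.FS (σ₂ ++ γ)) : N.FS (σ₁ ++ γ) := by
  obtain ⟨M, h₂⟩ := h₂
  obtain ⟨M₂, hσ₂, hγ⟩ := firesList_append.mp h₂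
  exact ⟨M, firesList_append.mpr ⟨M₂, h.firesList_of_firesList hσ₂, hγ⟩⟩

theorem fsInf_ofList_append_iff {l : List T} {ρ : Seq T} :
    N.FSInf ((Seq.ofList l).append ρ) ↔ N.FS l ∧ ∀ n, N.FS (l ++ ρ.take n) := by
  simp only [FSInf, Seq.take_ofList_append]
  refine ⟨fun h => ⟨by simpa using h l.length, fun n => ?_⟩, fun ⟨hl, h⟩ m => ?_⟩
  · simpa [List.take_of_length_le (by omega : l.length ≤ l.length + n)] using h (l.length + n)
  · rcases le_or_gt m l.length with hm | hm
    · simpa [Nat.sub_eq_zero_of_le hm] using hl.take m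
    · simpa [List.take_of_length_le hm.le] using h (m - l.length)

theorem Adj.fsInf_ofList_append {σ₁ σ₂ : List T} {ρ : Seq T} (h : N.Adj σ₁ σ₂)
    (h₂ : N.FSInf ((Seq.ofList σ₂).append ρ)) : N.FSInf ((Seq.ofList σ₁).append ρ) := by
  have hσ₁ : N.FS σ₁ := by obtain ⟨-, -, -, -, -, -, -, -, -, hσ₁, -⟩ := h; exact hσ₁
  exact fsInf_ofList_append_iff.mpr
    ⟨hσ₁, fun n => h.fs_append ((fsInf_ofList_append_iff.mp h₂).2 n)⟩

theorem Adj.adjSeq_ofList_append {σ₁ σ₂ : List T} {ρ : Seq T} (h : N.Adj σ₁ σ₂)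
    (h₂ : N.FSInf ((Seq.ofList σ₂).append ρ)) :
    N.AdjSeq ((Seq.ofList σ₁).append ρ) ((Seq.ofList σ₂).append ρ) := by
  have h₁ := h.fsInf_ofList_append h₂
  obtain ⟨α, β, t, u, M, rfl, rfl, hα, htu, -, -⟩ := h
  have split : ∀ a b : T, Seq.ofList (α ++ a :: b :: β) =
      (Seq.ofList (α ++ [a, b])).append (Seq.ofList β) := by simp [← Seq.ofList_append]
  refine ⟨α, (Seq.ofList β).append ρ, t, u, M, ?_, ?_, hα, htu, h₁, h₂⟩ <;>
    rw [split, Seq.append_assoc]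

theorem Adj.exists_adjSeq {σ₁ σ₂ : List T} {σ₃ : Seq T} (h : N.Adj σ₁ σ₂)
    (h₃ : N.FSInf σ₃) (h₂₃ : ListPrefixSeq σ₂ σ₃) :
    ∃ σ' : Seq T, N.FSInf σ' ∧ ListPrefixSeq σ₁ σ' ∧ N.AdjSeq σ' σ₃ ∧
      (σ₃.Terminates → σ'.Terminates) := by
  rw [h₂₃.eq_ofList_append] at h₃ ⊢
  refine ⟨_, h.fsInf_ofList_append h₃, listPrefixSeq_ofList_append _ _,
    h.adjSeq_ofList_append h₃, ?_⟩
  simp only [Seq.terminates_ofList_append_iff, imp_self]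

end Net

theorem swap_prefix_fs_general {S T : Type} (N : Net S T)
    (σ₁ σ₂ : List T) (σ₃ : Stream'.Seq T)
    (h12 : Relation.ReflTransGen N.Adj σ₁ σ₂)
    (h3 : N.FSInf σ₃) (h23 : ListPrefixSeq σ₂ σ₃) :
    ∃ σ' : Stream'.Seq T, N.FSInf σ' ∧ ListPrefixSeq σ₁ σ' ∧
      Relation.ReflTransGen N.AdjSeq σ' σ₃ ∧
      (σ₃.Terminates → σ'.Terminates) := by
  induction h12 using Relation.ReflTransGen.head_induction_on with
  | refl => exact ⟨σ₃, h3, h23, .refl, id⟩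
  | head hadj _ ih =>
    obtain ⟨σ'', h'', hpre'', hchain'', hterm''⟩ := ih
    obtain ⟨σ', h', hpre', hadj', hterm'⟩ := hadj.exists_adjSeq h'' hpre''
    exact ⟨σ', h', hpre', .head hadj' hchain'', hterm' ∘ hterm''⟩

theorem swap_prefix_fs {S T : Type} (N : Net S T)
    (σ₁ σ₂ : List T) (σ₃ : Stream'.Seq T)
    (h1 : N.FS σ₁) (h2 : N.FS σ₂)
    (h12 : Relation.ReflTransGen N.Adj σ₁ σ₂)
    (h3 : N.FSInf σ₃) (h23 : ListPrefixSeq σ₂ σ₃) :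
    ∃ σ' : Stream'.Seq T, N.FSInf σ' ∧ ListPrefixSeq σ₁ σ' ∧
      Relation.ReflTransGen N.AdjSeq σ' σ₃ ∧
      (σ₃.Terminates → σ'.Terminates) :=
  swap_prefix_fs_general N σ₁ σ₂ σ₃ h12 h3 h23
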